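/- arXiv:2010.10628 — 4 statements merged into one kernel-verified Lean document; each statement's English description precedes it below -/
import Mathlib

section
/- Let F : ℝ^n → ℝ^n be the saddle-gradient field F(x,y) = (∇_x L(x,y), −∇_y L(x,y)) of a twice differentiable function L, and let z* satisfy F(z*) = 0. Write A = ∇²_{xx}L(z*), B = ∇²_{xy}L(z*), C = −∇²_{yy}L(z*). Then the Jacobian of G(z) = −F(z) − (s/2)∇F(z)F(z) at z* has symmetric part equal to the block-diagonal matrix diag(−A − (s/2)(A² − BᵀB), −C − (s/2)(C² − BBᵀ)). -/
/-!
At a zero `z*` of `F` the product rule kills the term carrying the derivative of `∇F`, so the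
Jacobian of `G` at `z*` is `-M - (s/2) M²` with `M = ∇F(z*)`. For `M = [[A, Bᵀ], [-B, C]]` with
`A`, `C` symmetric, the off-diagonal blocks of `M` and of `M²` are negatives of each other's
transposes, so they cancel in the symmetric parts, which are `diag(A, C)` and
`diag(A² - BᵀB, C² - BBᵀ)`.
-/

open Matrix

theorem hasFDerivAt_mulVec_of_eq_zero {𝕜 E ι κ : Type*} [NontriviallyNormedField 𝕜]
    [CompleteSpace 𝕜] [NormedAddCommGroup E] [NormedSpace 𝕜 E] [Fintype ι]
    {M : E → Matrix κ ι 𝕜} {f : E → ι → 𝕜} {f' : E →L[𝕜] ι → 𝕜} {z : E}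
    (hM : DifferentiableAt 𝕜 (fun x i j => M x i j) z) (hf : HasFDerivAt f f' z) (hz : f z = 0) :
    HasFDerivAt (fun x => M x *ᵥ f x) ((M z).mulVecLin.toContinuousLinearMap.comp f') z := by
  refine hasFDerivAt_pi'' fun i => ?_
  have hentry : ∀ j, HasFDerivAt (fun x => M x i j * f x j)
      (M z i j • (ContinuousLinearMap.proj j).comp f') z := by
    intro j
    have hMij : DifferentiableAt 𝕜 (fun x => M x i j) z :=
      differentiableAt_pi.1 (differentiableAt_pi.1 hM i) j
    simpa [hz] using hMij.hasFDerivAt.fun_smul (hasFDerivAt_pi'.1 hf j)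
  convert HasFDerivAt.fun_sum (u := Finset.univ) fun j _ => hentry j using 1
  · rfl
  · ext v
    simp [mulVec, dotProduct]

theorem hasFDerivAt_neg_sub_smul_mulVec {𝕜 ι : Type*} [NontriviallyNormedField 𝕜]
    [CompleteSpace 𝕜] [Fintype ι] [DecidableEq ι]
    {M : (ι → 𝕜) → Matrix ι ι 𝕜} {f : (ι → 𝕜) → ι → 𝕜} {J : Matrix ι ι 𝕜} {z : ι → 𝕜}
    (hM : DifferentiableAt 𝕜 (fun x i j => M x i j) z)
    (hf : HasFDerivAt f J.mulVecLin.toContinuousLinearMap z) (hz : f z = 0) (c : 𝕜) :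
    HasFDerivAt (fun x => -f x - c • M x *ᵥ f x)
      ((-J - c • (M z * J)).mulVecLin.toContinuousLinearMap) z := by
  refine (hf.neg.sub ((hasFDerivAt_mulVec_of_eq_zero hM hf hz).const_smul c)).congr_fderiv ?_
  ext v : 1
  simp [mulVec_mulVec]

theorem fromBlocks_add_transpose {R m n : Type*} [CommRing R]
    {A : Matrix m m R} {C : Matrix n n R} (B : Matrix n m R) (hA : A.IsSymm) (hC : C.IsSymm) :
    fromBlocks A Bᵀ (-B) C + (fromBlocks A Bᵀ (-B) C)ᵀ = 2 • fromBlocks A 0 0 C := by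
  rw [fromBlocks_transpose, hA.eq, hC.eq, transpose_transpose, fromBlocks_add, two_smul,
    fromBlocks_add]
  simp

theorem fromBlocks_mul_self_add_transpose {R m n : Type*} [CommRing R] [Fintype m] [Fintype n]
    {A : Matrix m m R} {C : Matrix n n R} (B : Matrix n m R) (hA : A.IsSymm) (hC : C.IsSymm) :
    fromBlocks A Bᵀ (-B) C * fromBlocks A Bᵀ (-B) C
        + (fromBlocks A Bᵀ (-B) C * fromBlocks A Bᵀ (-B) C)ᵀ
      = 2 • fromBlocks (A * A - Bᵀ * B) 0 0 (C * C - B * Bᵀ) := by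
  rw [transpose_mul, fromBlocks_transpose, hA.eq, hC.eq, transpose_transpose, fromBlocks_multiply,
    fromBlocks_multiply, fromBlocks_add, fromBlocks_smul]
  congr 1 <;> simp only [transpose_neg, Matrix.mul_neg, Matrix.neg_mul, smul_zero, two_smul] <;> abel

theorem stmt4_general {n m : ℕ}
    (F : ((Fin n ⊕ Fin m) → ℝ) → ((Fin n ⊕ Fin m) → ℝ))
    (DF : ((Fin n ⊕ Fin m) → ℝ) → Matrix (Fin n ⊕ Fin m) (Fin n ⊕ Fin m) ℝ)
    (hDF : ∀ z, HasFDerivAt F ((DF z).mulVecLin.toContinuousLinearMap) z)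
    (zstar : (Fin n ⊕ Fin m) → ℝ) (hstat : F zstar = 0)
    (hDF' : DifferentiableAt ℝ (fun z i j => DF z i j) zstar)
    (A : Matrix (Fin n) (Fin n) ℝ) (hA : A.IsSymm)
    (C : Matrix (Fin m) (Fin m) ℝ) (hC : C.IsSymm)
    (B : Matrix (Fin m) (Fin n) ℝ)
    (hblocks : DF zstar = fromBlocks A Bᵀ (-B) C)
    (s : ℝ)
    (G : ((Fin n ⊕ Fin m) → ℝ) → ((Fin n ⊕ Fin m) → ℝ))
    (hG : ∀ z, G z = -F z - (s/2) • (DF z).mulVec (F z)) :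
    ∃ JG : Matrix (Fin n ⊕ Fin m) (Fin n ⊕ Fin m) ℝ,
      HasFDerivAt G (JG.mulVecLin.toContinuousLinearMap) zstar ∧
      (1/2 : ℝ) • (JG + JGᵀ)
        = fromBlocks (-A - (s/2) • (A * A - Bᵀ * B)) 0 0
            (-C - (s/2) • (C * C - B * Bᵀ)) := by
  set M := DF zstar
  refine ⟨-M - (s/2) • (M * M), ?_, ?_⟩
  · rw [funext hG]
    exact hasFDerivAt_neg_sub_smul_mulVec hDF' (hDF zstar) hstat (s/2)
  · have hsymm : (1/2 : ℝ) • (-M - (s/2) • (M * M) + (-M - (s/2) • (M * M))ᵀ)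
        = -((1/2 : ℝ) • (M + Mᵀ)) - (s/2) • ((1/2 : ℝ) • (M * M + (M * M)ᵀ)) := by
      simp only [transpose_sub, transpose_neg, transpose_smul]
      module
    rw [hsymm, hblocks, fromBlocks_add_transpose B hA hC, fromBlocks_mul_self_add_transpose B hA hC]
    simp only [sub_eq_add_neg, fromBlocks_smul, fromBlocks_neg, fromBlocks_add, smul_zero,
      neg_zero, add_zero]
    congr 1 <;> module

/-- symmetric part of the Jacobian of the GDA O(s)-resolution field
`G(z) = -F(z) - (s/2) ∇F(z) F(z)` at a stationary point of the saddle-gradient field `F`. -/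
theorem stmt4 {n m : ℕ}
    (L : ((Fin n ⊕ Fin m) → ℝ) → ℝ) (hL : ContDiff ℝ 2 L)
    (F : ((Fin n ⊕ Fin m) → ℝ) → ((Fin n ⊕ Fin m) → ℝ))
    (hF : ∀ z, F z = Sum.elim
        (fun i => fderiv ℝ L z (Pi.single (Sum.inl i) 1))
        (fun j => -(fderiv ℝ L z (Pi.single (Sum.inr j) 1))))
    (DF : ((Fin n ⊕ Fin m) → ℝ) → Matrix (Fin n ⊕ Fin m) (Fin n ⊕ Fin m) ℝ)
    (hDF : ∀ z, HasFDerivAt F ((DF z).mulVecLin.toContinuousLinearMap) z)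
    (zstar : (Fin n ⊕ Fin m) → ℝ) (hstat : F zstar = 0)
    (hDF' : DifferentiableAt ℝ (fun z i j => DF z i j) zstar)
    (A : Matrix (Fin n) (Fin n) ℝ) (hA : A.IsSymm)
    (C : Matrix (Fin m) (Fin m) ℝ) (hC : C.IsSymm)
    (B : Matrix (Fin m) (Fin n) ℝ)
    (hblocks : DF zstar = fromBlocks A Bᵀ (-B) C)
    (s : ℝ)
    (G : ((Fin n ⊕ Fin m) → ℝ) → ((Fin n ⊕ Fin m) → ℝ))
    (hG : ∀ z, G z = -F z - (s/2) • (DF z).mulVec (F z)) :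
    ∃ JG : Matrix (Fin n ⊕ Fin m) (Fin n ⊕ Fin m) ℝ,
      HasFDerivAt G (JG.mulVecLin.toContinuousLinearMap) zstar ∧
      (1/2 : ℝ) • (JG + JGᵀ)
        = fromBlocks (-A - (s/2) • (A * A - Bᵀ * B)) 0 0
            (-C - (s/2) • (C * C - B * Bᵀ)) :=
  stmt4_general F DF hDF zstar hstat hDF' A hA C hC B hblocks s G hG
end

section
/- With the same setup (A = ∇²_{xx}L(z*), B = ∇²_{xy}L(z*), C = −∇²_{yy}L(z*), F(z*) = 0), the Jacobian of G(z) = −F(z) + (s/2)∇F(z)F(z) at z* has symmetric part equal to diag(−A + (s/2)(A² − BᵀB), −C + (s/2)(C² − BBᵀ)). In particular, if A − (s/2)(A² − BBᵀ) ≻ 0 and C − (s/2)(C² − BᵀB) ≻ 0, then the symmetric part of the Jacobian is negative definite. -/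
/-!
Since `F z* = 0`, the product rule kills the term carrying the derivative of `∇F`, so the
Jacobian of `z ↦ ∇F(z) F(z)` at `z*` is `D²` with `D = ∇F(z*)`, and that of `G` is
`-D + (s/2) D²`. For `D = [[A, Bᵀ], [-B, C]]` with `A`, `C` symmetric, in both `D` and `D²` the
lower-left block is minus the transpose of the upper-right one, so the symmetric part is block
diagonal, and a block-diagonal matrix with positive definite blocks is positive definite.
-/

open Matrix

namespace Matrix

variable {m n : Type*}

theorem PosDef.fromBlocks_zero_zero [Fintype m] [Fintype n] {R : Type*} [CommRing R]
    [PartialOrder R] [StarRing R] [StarOrderedRing R] {M : Matrix m m R} {N : Matrix n n R}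
    (hM : M.PosDef) (hN : N.PosDef) : (fromBlocks M 0 0 N).PosDef := by
  refine of_dotProduct_mulVec_pos (hM.isHermitian.fromBlocks (by simp) hN.isHermitian) ?_
  intro x hx
  have hsplit : star x ⬝ᵥ (fromBlocks M 0 0 N *ᵥ x) =
      star (x ∘ Sum.inl) ⬝ᵥ (M *ᵥ (x ∘ Sum.inl)) + star (x ∘ Sum.inr) ⬝ᵥ (N *ᵥ (x ∘ Sum.inr)) := by
    rw [← Sum.elim_comp_inl_inr x, fromBlocks_mulVec]
    simp [dotProduct]
  rw [hsplit]
  by_cases hl : x ∘ Sum.inl = 0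
  · have hr : x ∘ Sum.inr ≠ 0 := fun hr => hx (by rw [← Sum.elim_comp_inl_inr x, hl, hr]; simp)
    simpa [hl] using hN.dotProduct_mulVec_pos hr
  · exact add_pos_of_pos_of_nonneg (hM.dotProduct_mulVec_pos hl)
      (hN.posSemidef.dotProduct_mulVec_nonneg _)

theorem half_smul_add_transpose_of_saddle [Fintype m] [Fintype n] {K : Type*} [Field K]
    [CharZero K] {A : Matrix m m K} {C : Matrix n n K} (hA : A.IsSymm) (hC : C.IsSymm)
    (B : Matrix n m K) (c : K) {D : Matrix (m ⊕ n) (m ⊕ n) K}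
    (hD : D = fromBlocks A Bᵀ (-B) C) :
    (1/2 : K) • ((-D + c • (D * D)) + (-D + c • (D * D))ᵀ) =
      fromBlocks (-A + c • (A * A - Bᵀ * B)) 0 0 (-C + c • (C * C - B * Bᵀ)) := by
  simp only [hD, fromBlocks_multiply, fromBlocks_neg, fromBlocks_smul, fromBlocks_add,
    fromBlocks_transpose]
  congr 1 <;>
    simp only [transpose_add, transpose_smul, transpose_neg, transpose_mul, transpose_transpose,
      hA.eq, hC.eq, Matrix.mul_neg, Matrix.neg_mul, neg_neg, smul_add, smul_neg, smul_smul] <;>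
    module

end Matrix

theorem HasFDerivAt.matrix_mulVec_of_eq_zero {𝕜 E m n : Type*} [NontriviallyNormedField 𝕜]
    [CompleteSpace 𝕜] [NormedAddCommGroup E] [NormedSpace 𝕜 E] [Fintype n]
    {M : E → Matrix m n 𝕜} {f : E → n → 𝕜} {f' : E →L[𝕜] n → 𝕜} {x : E}
    (hM : DifferentiableAt 𝕜 (fun z i j => M z i j) x) (hf : HasFDerivAt f f' x)
    (hfx : f x = 0) :
    HasFDerivAt (fun z => M z *ᵥ f z) ((M x).mulVecLin.toContinuousLinearMap.comp f') x := by
  refine hasFDerivAt_pi'.2 fun i => ?_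
  have hterm : ∀ j, HasFDerivAt (fun z => M z i j * f z j)
      (M x i j • (ContinuousLinearMap.proj j).comp f') x := by
    intro j
    have hMij : HasFDerivAt (fun z => M z i j) ((ContinuousLinearMap.proj j).comp
        ((ContinuousLinearMap.proj i).comp (fderiv 𝕜 (fun z i j => M z i j) x))) x :=
      hasFDerivAt_pi'.1 (hasFDerivAt_pi'.1 hM.hasFDerivAt i) j
    exact (hMij.mul (hasFDerivAt_pi'.1 hf j)).congr_fderiv (by ext v; simp [hfx])
  convert HasFDerivAt.fun_sum fun j (_ : j ∈ Finset.univ) => hterm j using 1 <;>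
    ext v <;> simp [mulVec, dotProduct]

theorem stmt5_general {n m : ℕ}
    (F : ((Fin n ⊕ Fin m) → ℝ) → ((Fin n ⊕ Fin m) → ℝ))
    (DF : ((Fin n ⊕ Fin m) → ℝ) → Matrix (Fin n ⊕ Fin m) (Fin n ⊕ Fin m) ℝ)
    (hDF : ∀ z, HasFDerivAt F ((DF z).mulVecLin.toContinuousLinearMap) z)
    (zstar : (Fin n ⊕ Fin m) → ℝ) (hstat : F zstar = 0)
    (hDF' : DifferentiableAt ℝ (fun z i j => DF z i j) zstar)
    (A : Matrix (Fin n) (Fin n) ℝ) (hA : A.IsSymm)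
    (C : Matrix (Fin m) (Fin m) ℝ) (hC : C.IsSymm)
    (B : Matrix (Fin m) (Fin n) ℝ)
    (hblocks : DF zstar = fromBlocks A Bᵀ (-B) C)
    (s : ℝ)
    (G : ((Fin n ⊕ Fin m) → ℝ) → ((Fin n ⊕ Fin m) → ℝ))
    (hG : ∀ z, G z = -F z + (s/2) • (DF z).mulVec (F z)) :
    ∃ JG : Matrix (Fin n ⊕ Fin m) (Fin n ⊕ Fin m) ℝ,
      HasFDerivAt G (JG.mulVecLin.toContinuousLinearMap) zstar ∧
      (1/2 : ℝ) • (JG + JGᵀ)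
        = fromBlocks (-A + (s/2) • (A * A - Bᵀ * B)) 0 0
            (-C + (s/2) • (C * C - B * Bᵀ))
        ∧ ((A - (s/2) • (A * A - Bᵀ * B)).PosDef → (C - (s/2) • (C * C - B * Bᵀ)).PosDef →
            ((-1 : ℝ) • ((1/2 : ℝ) • (JG + JGᵀ))).PosDef) := by
  set D := DF zstar
  have hsymm := half_smul_add_transpose_of_saddle hA hC B (s/2) hblocks
  refine ⟨-D + (s/2) • (D * D), ?_, hsymm, fun hpos₁ hpos₂ => ?_⟩
  · have hquad := HasFDerivAt.matrix_mulVec_of_eq_zero hDF' (hDF zstar) hstat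
    rw [funext hG]
    refine ((hDF zstar).neg.add (hquad.const_smul (s/2))).congr_fderiv ?_
    ext v
    simp [mulVec_mulVec, D]
  · rw [hsymm]
    simp only [neg_one_smul, fromBlocks_neg, neg_zero, neg_add', neg_neg]
    exact hpos₁.fromBlocks_zero_zero hpos₂

/-- symmetric part of the Jacobian of the EGM O(s)-resolution field
`G(z) = -F(z) + (s/2) ∇F(z) F(z)` at a stationary point of the saddle-gradient field `F`. -/
theorem stmt5 {n m : ℕ}
    (L : ((Fin n ⊕ Fin m) → ℝ) → ℝ) (hL : ContDiff ℝ 2 L)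
    (F : ((Fin n ⊕ Fin m) → ℝ) → ((Fin n ⊕ Fin m) → ℝ))
    (hF : ∀ z, F z = Sum.elim
        (fun i => fderiv ℝ L z (Pi.single (Sum.inl i) 1))
        (fun j => -(fderiv ℝ L z (Pi.single (Sum.inr j) 1))))
    (DF : ((Fin n ⊕ Fin m) → ℝ) → Matrix (Fin n ⊕ Fin m) (Fin n ⊕ Fin m) ℝ)
    (hDF : ∀ z, HasFDerivAt F ((DF z).mulVecLin.toContinuousLinearMap) z)
    (zstar : (Fin n ⊕ Fin m) → ℝ) (hstat : F zstar = 0)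
    (hDF' : DifferentiableAt ℝ (fun z i j => DF z i j) zstar)
    (A : Matrix (Fin n) (Fin n) ℝ) (hA : A.IsSymm)
    (C : Matrix (Fin m) (Fin m) ℝ) (hC : C.IsSymm)
    (B : Matrix (Fin m) (Fin n) ℝ)
    (hblocks : DF zstar = fromBlocks A Bᵀ (-B) C)
    (s : ℝ)
    (G : ((Fin n ⊕ Fin m) → ℝ) → ((Fin n ⊕ Fin m) → ℝ))
    (hG : ∀ z, G z = -F z + (s/2) • (DF z).mulVec (F z)) :
    ∃ JG : Matrix (Fin n ⊕ Fin m) (Fin n ⊕ Fin m) ℝ,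
      HasFDerivAt G (JG.mulVecLin.toContinuousLinearMap) zstar ∧
      (1/2 : ℝ) • (JG + JGᵀ)
        = fromBlocks (-A + (s/2) • (A * A - Bᵀ * B)) 0 0
            (-C + (s/2) • (C * C - B * Bᵀ))
        ∧ ((A - (s/2) • (A * A - Bᵀ * B)).PosDef → (C - (s/2) • (C * C - B * Bᵀ)).PosDef →
            ((-1 : ℝ) • ((1/2 : ℝ) • (JG + JGᵀ))).PosDef) :=
  stmt5_general F DF hDF zstar hstat hDF' A hA C hC B hblocks s G hG
end

section
/- Let F(z) = Jz be a linear saddle field with J = [[A, Bᵀ],[−B, C]], A, C symmetric. Suppose A + (s/2)(A² − BᵀB) ≻ 0 and C + (s/2)(C² − BBᵀ) ≻ 0. Then every solution of the ODE ż = −F(z) − (s/2)∇F(z)F(z) = −(J + (s/2)J²)z converges to 0 exponentially: there exists ρ > 0 with ‖z(t)‖ ≤ e^{−ρt}‖z(0)‖. -/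
/-!
The matrix `M = J + (s/2) J²` of the flow has symmetric part
`diag(A + (s/2)(A² − BᵀB), C + (s/2)(C² − BBᵀ))`, because the off-diagonal blocks of `J` and of
`J²` are antisymmetric. This block-diagonal matrix is positive definite, so `⟪v, M v⟫ ≥ ρ ‖v‖²`
for some `ρ > 0`, and along a solution of `ż = −M z` the energy `‖z‖²` satisfies
`d/dt ‖z‖² ≤ −2ρ ‖z‖²`; Grönwall's inequality gives `‖z t‖ ≤ e^{−ρt} ‖z 0‖`.
-/

open Matrix

theorem HasDerivAt.dotProduct {ι : Type*} [Fintype ι] {u w : ℝ → ι → ℝ} {u' w' : ι → ℝ} {t : ℝ}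
    (hu : HasDerivAt u u' t) (hw : HasDerivAt w w' t) :
    HasDerivAt (fun t => u t ⬝ᵥ w t) (u' ⬝ᵥ w t + u t ⬝ᵥ w') t := by
  simp only [_root_.dotProduct, ← Finset.sum_add_distrib]
  exact HasDerivAt.fun_sum fun i _ => (hasDerivAt_pi.1 hu i).mul (hasDerivAt_pi.1 hw i)

theorem le_mul_exp_of_hasDerivAt_le_mul {f f' : ℝ → ℝ} {K t : ℝ}
    (hf : ∀ x, HasDerivAt f (f' x) x) (hle : ∀ x, f' x ≤ K * f x) (ht : 0 ≤ t) :
    f t ≤ f 0 * Real.exp (K * t) := by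
  have := le_gronwallBound_of_liminf_deriv_right_le (b := t) (ε := 0)
    (fun x _ => (hf x).continuousAt.continuousWithinAt)
    (fun x _ _ hr => (hf x).hasDerivWithinAt.liminf_right_slope_le hr) le_rfl
    (fun x _ => by simpa using hle x) t ⟨ht, le_rfl⟩
  simpa [gronwallBound_ε0] using this

theorem sqrt_dotProduct_self_le_of_hasDerivAt_neg_mulVec {ι : Type*} [Fintype ι]
    {M : Matrix ι ι ℝ} {ρ : ℝ} (hM : ∀ v, ρ * (v ⬝ᵥ v) ≤ v ⬝ᵥ (M *ᵥ v))
    {z : ℝ → ι → ℝ} (hz : ∀ t, HasDerivAt z (-(M *ᵥ z t)) t) {t : ℝ} (ht : 0 ≤ t) :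
    √(z t ⬝ᵥ z t) ≤ Real.exp (-ρ * t) * √(z 0 ⬝ᵥ z 0) := by
  have hsq : z t ⬝ᵥ z t ≤ z 0 ⬝ᵥ z 0 * Real.exp (-2 * ρ * t) := by
    refine le_mul_exp_of_hasDerivAt_le_mul (fun x => (hz x).dotProduct (hz x)) (fun x => ?_) ht
    rw [neg_dotProduct, dotProduct_neg, dotProduct_comm (M *ᵥ z x)]
    linarith [hM (z x)]
  calc √(z t ⬝ᵥ z t) ≤ √(z 0 ⬝ᵥ z 0 * Real.exp (-2 * ρ * t)) := Real.sqrt_le_sqrt hsq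
    _ = Real.exp (-ρ * t) * √(z 0 ⬝ᵥ z 0) := by
      rw [show -2 * ρ * t = -ρ * t + -ρ * t by ring, Real.exp_add,
        Real.sqrt_mul' _ (by positivity), Real.sqrt_mul_self (Real.exp_nonneg _), mul_comm]

open scoped MatrixOrder in
theorem Matrix.PosDef.exists_pos_mul_dotProduct_self_le {ι : Type*} [Fintype ι] [DecidableEq ι]
    {P : Matrix ι ι ℝ} (hP : P.PosDef) :
    ∃ c > (0:ℝ), ∀ x : ι → ℝ, c * (x ⬝ᵥ x) ≤ x ⬝ᵥ (P *ᵥ x) := by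
  cases isEmpty_or_nonempty ι
  · exact ⟨1, one_pos, fun x => by simp [Subsingleton.elim x 0]⟩
  obtain ⟨c, hc, hcP⟩ := (CFC.exists_pos_algebraMap_le_iff hP.isHermitian).mpr
    fun _ => hP.isStrictlyPositive.spectrum_pos
  refine ⟨c, hc, fun x => ?_⟩
  have := (Matrix.le_iff.mp hcP).dotProduct_mulVec_nonneg x
  simpa [sub_mulVec, algebraMap_eq_diagonal, dotProduct_sub, Pi.algebraMap_def] using this

open scoped ComplexOrder in
theorem Matrix.PosDef.fromBlocks_zero {𝕜 m n : Type*} [RCLike 𝕜] [Fintype m] [Fintype n]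
    {P : Matrix m m 𝕜} {Q : Matrix n n 𝕜} (hP : P.PosDef) (hQ : Q.PosDef) :
    (fromBlocks P 0 0 Q).PosDef := by
  refine .of_dotProduct_mulVec_pos (hP.isHermitian.fromBlocks (by simp) hQ.isHermitian)
    fun v hv => ?_
  obtain ⟨x, y, rfl⟩ : ∃ x y, v = Sum.elim x y := ⟨_, _, (Sum.elim_comp_inl_inr v).symm⟩
  have hstar : star (Sum.elim x y) = Sum.elim (star x) (star y) := by ext (_ | _) <;> rfl
  simp only [fromBlocks_mulVec, zero_mulVec, add_zero, zero_add, Sum.elim_comp_inl,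
    Sum.elim_comp_inr, hstar, sumElim_dotProduct_sumElim]
  obtain rfl | hx := eq_or_ne x 0
  · have hy : y ≠ 0 := by rintro rfl; simp at hv
    simpa using hQ.dotProduct_mulVec_pos hy
  · exact add_pos_of_pos_of_nonneg (hP.dotProduct_mulVec_pos hx)
      (hQ.posSemidef.dotProduct_mulVec_nonneg y)

theorem Matrix.dotProduct_mulVec_add_transpose {R ι : Type*} [CommRing R] [Fintype ι]
    (M : Matrix ι ι R) (v : ι → R) : v ⬝ᵥ ((M + Mᵀ) *ᵥ v) = 2 * (v ⬝ᵥ (M *ᵥ v)) := by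
  rw [add_mulVec, dotProduct_add, mulVec_transpose, dotProduct_comm v (v ᵥ* M),
    ← dotProduct_mulVec]
  ring

theorem Matrix.fromBlocks_add_smul_sq_add_transpose {R m n : Type*} [CommRing R]
    [Fintype m] [Fintype n] {A : Matrix m m R} {C : Matrix n n R} (hA : A.IsSymm) (hC : C.IsSymm)
    (B : Matrix n m R) (c : R) :
    fromBlocks A Bᵀ (-B) C + c • (fromBlocks A Bᵀ (-B) C * fromBlocks A Bᵀ (-B) C)
      + (fromBlocks A Bᵀ (-B) C + c • (fromBlocks A Bᵀ (-B) C * fromBlocks A Bᵀ (-B) C))ᵀ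
      = (2 : R) • fromBlocks (A + c • (A * A - Bᵀ * B)) 0 0 (C + c • (C * C - B * Bᵀ)) := by
  simp only [transpose_add, transpose_smul, transpose_mul, fromBlocks_transpose, hA.eq, hC.eq,
    transpose_neg, transpose_transpose, fromBlocks_multiply, fromBlocks_smul, fromBlocks_add]
  congr 1 <;> simp only [Matrix.mul_neg, Matrix.neg_mul] <;> module

theorem stmt15_general {n m : ℕ} (s : ℝ)
    (A : Matrix (Fin n) (Fin n) ℝ) (hA : A.IsSymm)
    (C : Matrix (Fin m) (Fin m) ℝ) (hC : C.IsSymm)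
    (B : Matrix (Fin m) (Fin n) ℝ)
    (hApos : (A + (s/2) • (A * A - Bᵀ * B)).PosDef)
    (hCpos : (C + (s/2) • (C * C - B * Bᵀ)).PosDef) :
    ∃ ρ > (0:ℝ), ∀ z : ℝ → ((Fin n ⊕ Fin m) → ℝ),
      (∀ t, HasDerivAt z
        (-((fromBlocks A Bᵀ (-B) C
            + (s/2) • (fromBlocks A Bᵀ (-B) C * fromBlocks A Bᵀ (-B) C)).mulVec (z t))) t) →
      ∀ t ≥ (0:ℝ), Real.sqrt (z t ⬝ᵥ z t) ≤ Real.exp (-ρ * t) * Real.sqrt (z 0 ⬝ᵥ z 0) := by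
  obtain ⟨ρ, hρ, hlow⟩ := (hApos.fromBlocks_zero hCpos).exists_pos_mul_dotProduct_self_le
  refine ⟨ρ, hρ, fun z hz t ht =>
    sqrt_dotProduct_self_le_of_hasDerivAt_neg_mulVec (fun v => ?_) hz ht⟩
  have hsymm := dotProduct_mulVec_add_transpose
    (fromBlocks A Bᵀ (-B) C + (s/2) • (fromBlocks A Bᵀ (-B) C * fromBlocks A Bᵀ (-B) C)) v
  rw [fromBlocks_add_smul_sq_add_transpose hA hC, smul_mulVec, dotProduct_smul, smul_eq_mul]
    at hsymm
  linarith [hlow v]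

theorem stmt15 {n m : ℕ} (s : ℝ) (hs : 0 < s)
    (A : Matrix (Fin n) (Fin n) ℝ) (hA : A.IsSymm)
    (C : Matrix (Fin m) (Fin m) ℝ) (hC : C.IsSymm)
    (B : Matrix (Fin m) (Fin n) ℝ)
    (hApos : (A + (s/2) • (A * A - Bᵀ * B)).PosDef)
    (hCpos : (C + (s/2) • (C * C - B * Bᵀ)).PosDef) :
    ∃ ρ > (0:ℝ), ∀ z : ℝ → ((Fin n ⊕ Fin m) → ℝ),
      (∀ t, HasDerivAt z
        (-((fromBlocks A Bᵀ (-B) C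
            + (s/2) • (fromBlocks A Bᵀ (-B) C * fromBlocks A Bᵀ (-B) C)).mulVec (z t))) t) →
      ∀ t ≥ (0:ℝ), Real.sqrt (z t ⬝ᵥ z t) ≤ Real.exp (-ρ * t) * Real.sqrt (z 0 ⬝ᵥ z 0) :=
  stmt15_general s A hA C hC B hApos hCpos
end

section
/- Let Σ, Σ' be positive semidefinite n×n matrices with Σ ⪰ Σ'. For the block matrix J(α, s) = [[−(α + (s/2)(α² − 1/4))I, (1/2)I + (s/16)Σ'], [−(1/2)I − (s/16)Σ', (1/4)(Σ − Σ') − αI + (s/2)((1/4)I + ((1/4)(Σ−Σ') + αI)((1/4)(Σ−Σ') − αI))]], at α = 0 and any s > 0, J(0, s) has an eigenvalue with positive real part, because its trace is positive: tr J(0,s) = (ns/8) + (1/4)tr(Σ − Σ') + (s/2)(n/4 + (1/16)tr((Σ−Σ')²)) > 0. -/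
/-!
The trace of a real matrix is the sum of the real parts of its complex eigenvalues, so it suffices
that `tr J(0, s) > 0`. The two diagonal blocks of `J(0, s)` have traces `n s / 8` and
`tr(D) / 4 + (s / 2) (n / 4 + tr(D²) / 16)` with `D = Σ - Σ'`, and `tr D, tr D² ≥ 0` because `D`
is positive semidefinite.
-/

open Matrix Polynomial

/-- Jacobian of the O(s)-resolution GDA dynamics at the origin of the regularized
one-layer Gaussian GAN, with data covariance `S`, latent covariance `S'`,
regularization `α` and stepsize `s`. -/
noncomputable def ganJacobian {n : ℕ} (S S' : Matrix (Fin n) (Fin n) ℝ) (α s : ℝ) :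
    Matrix (Fin n ⊕ Fin n) (Fin n ⊕ Fin n) ℝ :=
  fromBlocks
    (-(α + (s/2) * (α ^ 2 - 1/4)) • (1 : Matrix (Fin n) (Fin n) ℝ))
    ((1/2 : ℝ) • (1 : Matrix (Fin n) (Fin n) ℝ) + (s/16) • S')
    (-((1/2 : ℝ) • (1 : Matrix (Fin n) (Fin n) ℝ) + (s/16) • S'))
    ((1/4 : ℝ) • (S - S') - α • (1 : Matrix (Fin n) (Fin n) ℝ)
      + (s/2) • ((1/4 : ℝ) • (1 : Matrix (Fin n) (Fin n) ℝ)
          + ((1/4 : ℝ) • (S - S') + α • (1 : Matrix (Fin n) (Fin n) ℝ))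
            * ((1/4 : ℝ) • (S - S') - α • (1 : Matrix (Fin n) (Fin n) ℝ))))

namespace Matrix

theorem trace_fromBlocks {R l m : Type*} [AddCommMonoid R] [Fintype l] [Fintype m]
    (A : Matrix l l R) (B : Matrix l m R) (C : Matrix m l R) (D : Matrix m m R) :
    (fromBlocks A B C D).trace = A.trace + D.trace := by
  simp [trace, Fintype.sum_sum_type]

theorem IsHermitian.trace_mul_self_nonneg {R n : Type*} [Fintype n] [CommRing R] [PartialOrder R]
    [StarRing R] [StarOrderedRing R] {A : Matrix n n R} (hA : A.IsHermitian) :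
    0 ≤ (A * A).trace := by
  simpa only [hA.eq] using (posSemidef_conjTranspose_mul_self A).trace_nonneg

theorem exists_re_pos_mem_roots_charpoly_of_trace_pos {n : Type*} [Fintype n] [DecidableEq n]
    {A : Matrix n n ℝ} (hA : 0 < A.trace) :
    ∃ μ ∈ (A.map (Complex.ofReal ·)).charpoly.roots, 0 < μ.re := by
  by_contra! h
  set roots := (A.map (Complex.ofReal ·)).charpoly.roots
  have hsum : (roots.map Complex.re).sum = A.trace := by
    have htrace : (A.trace : ℂ) = roots.sum :=
      (AddMonoidHom.map_trace Complex.ofRealHom A).trans (trace_eq_sum_roots_charpoly _)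
    rw [← Complex.ofReal_re A.trace, htrace]
    exact (map_multiset_sum Complex.reAddGroupHom roots).symm
  have hle : (roots.map Complex.re).sum ≤ 0 := by
    simpa using Multiset.sum_le_card_nsmul (roots.map Complex.re) 0 (by simpa using h)
  linarith

end Matrix

theorem trace_ganJacobian {n : ℕ} (S S' : Matrix (Fin n) (Fin n) ℝ) (α s : ℝ) :
    (ganJacobian S S' α s).trace
      = -n * (α + s / 2 * (α ^ 2 - 1 / 4)) + (1 / 4) * (S - S').trace - n * α
        + s / 2 * (n / 4 + (1 / 16) * ((S - S') * (S - S')).trace - n * α ^ 2) := by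
  simp only [ganJacobian, trace_fromBlocks, add_mul, mul_add, sub_mul, mul_sub, smul_mul_smul_comm,
    mul_smul, one_mul, mul_one, trace_add, trace_sub, trace_smul, trace_one, smul_eq_mul,
    Fintype.card_fin]
  ring

theorem stmt17_general {n : ℕ} (hn : 0 < n)
    (S S' : Matrix (Fin n) (Fin n) ℝ)
    (hSS' : (S - S').PosSemidef)
    (s : ℝ) (hs : 0 < s) :
    (ganJacobian S S' 0 s).trace
        = (n : ℝ) * s / 8 + (1/4) * (S - S').trace
          + (s/2) * ((n : ℝ) / 4 + (1/16) * ((S - S') * (S - S')).trace) ∧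
    0 < (ganJacobian S S' 0 s).trace ∧
    ∃ μ ∈ ((ganJacobian S S' 0 s).map (Complex.ofReal ·)).charpoly.roots,
      0 < μ.re := by
  have htr : (ganJacobian S S' 0 s).trace
      = (n : ℝ) * s / 8 + (1/4) * (S - S').trace
        + (s/2) * ((n : ℝ) / 4 + (1/16) * ((S - S') * (S - S')).trace) := by
    rw [trace_ganJacobian]
    ring
  have hpos : 0 < (ganJacobian S S' 0 s).trace := by
    have hD := hSS'.trace_nonneg
    have hD2 := hSS'.isHermitian.trace_mul_self_nonneg
    have hn' : (0 : ℝ) < n := Nat.cast_pos.mpr hn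
    rw [htr]
    positivity
  exact ⟨htr, hpos, exists_re_pos_mem_roots_charpoly_of_trace_pos hpos⟩

theorem stmt17 {n : ℕ} (hn : 0 < n)
    (S S' : Matrix (Fin n) (Fin n) ℝ)
    (hS : S.PosSemidef) (hS' : S'.PosSemidef) (hSS' : (S - S').PosSemidef)
    (s : ℝ) (hs : 0 < s) :
    (ganJacobian S S' 0 s).trace
        = (n : ℝ) * s / 8 + (1/4) * (S - S').trace
          + (s/2) * ((n : ℝ) / 4 + (1/16) * ((S - S') * (S - S')).trace) ∧
    0 < (ganJacobian S S' 0 s).trace ∧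
    ∃ μ ∈ ((ganJacobian S S' 0 s).map (Complex.ofReal ·)).charpoly.roots,
      0 < μ.re :=
  stmt17_general hn S S' hSS' s hs
end
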